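/- arXiv:1504.01150 — 4 statements merged into one kernel-verified Lean document; each statement's English description precedes it below -/
import Mathlib

section
/- Let T > 0, L > 0. For every absolutely continuous x : [0,T] → ℝ with x(0) = 1 and square-integrable derivative, we have ∫₀^T (x'(s))² ds + L·x(T)² ≥ 1/(T + 1/L). -/
open MeasureTheory intervalIntegral

/-- Lower bound of the deterministic control problem: every absolutely continuous
`x : [0,T] → ℝ` with `x 0 = 1` and square-integrable derivative satisfies
`∫₀^T (x'(s))² ds + L·x(T)² ≥ 1/(T + 1/L)`. -/
theorem stmt_2 (T L : ℝ) (hT : 0 < T) (hL : 0 < L)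
    (x x' : ℝ → ℝ)
    (hx0 : x 0 = 1)
    (hint : IntegrableOn x' (Set.Icc 0 T))
    (hint2 : IntegrableOn (fun s => (x' s) ^ 2) (Set.Icc 0 T))
    (hAC : ∀ t ∈ Set.Icc (0 : ℝ) T, x t = 1 + ∫ s in (0 : ℝ)..t, x' s) :
    1 / (T + 1 / L) ≤ (∫ s in (0 : ℝ)..T, (x' s) ^ 2) + L * (x T) ^ 2 := by
  have hiv : IntervalIntegrable x' volume 0 T := by
    apply IntegrableOn.intervalIntegrable
    rwa [Set.uIcc_of_le hT.le]
  have hiv2 : IntervalIntegrable (fun s => (x' s) ^ 2) volume 0 T := by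
    apply IntegrableOn.intervalIntegrable
    rwa [Set.uIcc_of_le hT.le]
  set I : ℝ := ∫ s in (0 : ℝ)..T, x' s with hI
  set J : ℝ := ∫ s in (0 : ℝ)..T, (x' s) ^ 2 with hJ
  -- Cauchy–Schwarz: I² ≤ J * T
  have h0 : (0:ℝ) ≤ ∫ s in (0 : ℝ)..T, (T * x' s - I) ^ 2 :=
    intervalIntegral.integral_nonneg hT.le (fun s _ => sq_nonneg _)
  have hexp : (∫ s in (0 : ℝ)..T, (T * x' s - I) ^ 2)
      = T ^ 2 * J - 2 * T * I * I + I ^ 2 * T := by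
    have heq : ∀ s, (T * x' s - I) ^ 2
        = T ^ 2 * (x' s) ^ 2 - (2 * T * I) * x' s + I ^ 2 := by
      intro s; ring
    simp_rw [heq]
    rw [intervalIntegral.integral_add ((hiv2.const_mul _).sub (hiv.const_mul _))
        intervalIntegrable_const,
      intervalIntegral.integral_sub (hiv2.const_mul _) (hiv.const_mul _),
      intervalIntegral.integral_const_mul, intervalIntegral.integral_const_mul,
      intervalIntegral.integral_const]
    simp only [smul_eq_mul, sub_zero]
    ring
  have hJT : I ^ 2 ≤ J * T := by
    rw [hexp] at h0
    nlinarith [hT, h0]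
  have hxT : x T = 1 + I := hAC T ⟨hT.le, le_refl T⟩
  have key : L ≤ (J + L * (x T) ^ 2) * (L * T + 1) := by
    rw [hxT]
    nlinarith [sq_nonneg ((L * T + 1) * I + T * L), hJT, hT, hL,
      mul_pos hL hT, sq_nonneg I]
  have hden : (0:ℝ) < L * T + 1 := by positivity
  have hrw : 1 / (T + 1 / L) = L / (L * T + 1) := by
    rw [div_eq_div_iff (by positivity) (by positivity : (0:ℝ) < L*T+1).ne']
    field_simp
  rw [hrw, div_le_iff₀ hden]
  linarith [key]
end

section
/- Fix λ ≥ 0, q > 1 and let p be the Hölder conjugate of q. Define w : ℝ → ℝ by w(u) = u·(1 - λ/(u^{q-1} + λ^{q-1})^{p-1}) for u ≥ 0 and w(u) = 0 for u < 0. Then w is monotone non-decreasing on ℝ. -/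
open Real

/-- The integrand `ϖ` of the generator `Θ`: for `λ ≥ 0` and Hölder conjugates
`p, q > 1`, the function `w(u) = u·(1 - λ/(u^(q-1) + λ^(q-1))^(p-1))` for `u ≥ 0`,
`w(u) = 0` for `u < 0`, is monotone non-decreasing on `ℝ`. -/
theorem stmt_3 (lam p q : ℝ) (hlam : 0 ≤ lam) (hp : 1 < p) (hq : 1 < q)
    (hpq : 1 / p + 1 / q = 1) :
    Monotone (fun u : ℝ =>
      if 0 ≤ u then u * (1 - lam / (u ^ (q - 1) + lam ^ (q - 1)) ^ (p - 1))
      else 0) := by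
  have hp0 : (0:ℝ) < p - 1 := by linarith
  have hq0 : (0:ℝ) < q - 1 := by linarith
  have hp' : p ≠ 0 := by positivity
  have hq' : q ≠ 0 := by positivity
  have hpq' : p + q = p * q := by field_simp at hpq; linarith
  have hmul : (q - 1) * (p - 1) = 1 := by nlinarith
  set a : ℝ := lam ^ (q - 1) with ha
  have ha0 : 0 ≤ a := Real.rpow_nonneg hlam _
  set F : ℝ → ℝ := fun u => u * (1 - lam / (u ^ (q - 1) + a) ^ (p - 1)) with hF
  -- key bound: lam ≤ D(u) for 0 ≤ u
  have hkey : ∀ u : ℝ, 0 ≤ u → lam ≤ (u ^ (q - 1) + a) ^ (p - 1) := by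
    intro u hu
    have h1 : a ≤ u ^ (q - 1) + a := le_add_of_nonneg_left (Real.rpow_nonneg hu _)
    have h2 : (lam ^ (q - 1)) ^ (p - 1) = lam := by
      rw [← Real.rpow_mul hlam, hmul, Real.rpow_one]
    calc lam = (lam ^ (q - 1)) ^ (p - 1) := h2.symm
      _ ≤ (u ^ (q - 1) + a) ^ (p - 1) := Real.rpow_le_rpow ha0 h1 hp0.le
  -- F is nonnegative on Ici 0
  have hFnn : ∀ u : ℝ, 0 ≤ u → 0 ≤ F u := by
    intro u hu
    have hD : 0 ≤ (u ^ (q - 1) + a) ^ (p - 1) := le_trans hlam (hkey u hu)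
    have : lam / (u ^ (q - 1) + a) ^ (p - 1) ≤ 1 :=
      div_le_one_of_le₀ (hkey u hu) hD
    have : 0 ≤ 1 - lam / (u ^ (q - 1) + a) ^ (p - 1) := by linarith
    exact mul_nonneg hu this
  -- F is monotone on Ici 0
  have hFmono : MonotoneOn F (Set.Ici (0:ℝ)) := by
    rcases eq_or_lt_of_le hlam with h0 | h0
    · -- lam = 0 : F is the identity
      have : ∀ u : ℝ, F u = u := by
        intro u; simp [hF, ← h0]
      intro u hu v hv huv
      rw [this u, this v]; exact huv
    · -- lam > 0
      have hDpos : ∀ u : ℝ, 0 ≤ u → 0 < (u ^ (q - 1) + a) ^ (p - 1) :=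
        fun u hu => lt_of_lt_of_le h0 (hkey u hu)
      have hcont : ContinuousOn F (Set.Ici (0:ℝ)) := by
        intro u hu
        apply ContinuousAt.continuousWithinAt
        have c1 : ContinuousAt (fun u : ℝ => u ^ (q - 1)) u :=
          Real.continuousAt_rpow_const u _ (Or.inr hq0.le)
        have c2 : ContinuousAt (fun u : ℝ => (u ^ (q - 1) + a) ^ (p - 1)) u :=
          (c1.add continuousAt_const).rpow_const (Or.inr hp0.le)
        have c3 : ContinuousAt (fun u : ℝ => lam / (u ^ (q - 1) + a) ^ (p - 1)) u :=
          continuousAt_const.div c2 (ne_of_gt (hDpos u hu))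
        exact continuousAt_id.mul (continuousAt_const.sub c3)
      have hIoi : interior (Set.Ici (0:ℝ)) = Set.Ioi 0 := interior_Ici
      apply monotoneOn_of_hasDerivWithinAt_nonneg (convex_Ici 0) hcont
        (f' := fun x => 1 * (1 - lam / (x ^ (q - 1) + a) ^ (p - 1)) +
          x * -((0 * (x ^ (q - 1) + a) ^ (p - 1) -
            lam * ((q - 1) * x ^ (q - 1 - 1) * (p - 1) * (x ^ (q - 1) + a) ^ (p - 1 - 1))) /
              ((x ^ (q - 1) + a) ^ (p - 1)) ^ 2))
      · intro x hx
        rw [hIoi] at hx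
        have hxpos : (0:ℝ) < x := hx
        have hsx : 0 < x ^ (q - 1) + a :=
          add_pos_of_pos_of_nonneg (Real.rpow_pos_of_pos hxpos _) ha0
        have h1 : HasDerivAt (fun u : ℝ => u ^ (q - 1)) ((q - 1) * x ^ (q - 1 - 1)) x :=
          Real.hasDerivAt_rpow_const (Or.inl hxpos.ne')
        have h2 : HasDerivAt (fun u : ℝ => u ^ (q - 1) + a) ((q - 1) * x ^ (q - 1 - 1)) x :=
          h1.add_const a
        have h3 : HasDerivAt (fun u : ℝ => (u ^ (q - 1) + a) ^ (p - 1))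
            ((q - 1) * x ^ (q - 1 - 1) * (p - 1) * (x ^ (q - 1) + a) ^ (p - 1 - 1)) x :=
          h2.rpow_const (Or.inl hsx.ne')
        have h4 := (hasDerivAt_const x lam).div h3 (ne_of_gt (hDpos x hxpos.le))
        have h5 := h4.const_sub 1
        have h6 := (hasDerivAt_id x).mul h5
        exact h6.hasDerivWithinAt
      · intro x hx
        rw [hIoi] at hx
        have hxpos : (0:ℝ) < x := hx
        have hsx : 0 < x ^ (q - 1) + a :=
          add_pos_of_pos_of_nonneg (Real.rpow_pos_of_pos hxpos _) ha0
        have hD : 0 < (x ^ (q - 1) + a) ^ (p - 1) := hDpos x hxpos.le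
        have hle : lam / (x ^ (q - 1) + a) ^ (p - 1) ≤ 1 :=
          div_le_one_of_le₀ (hkey x hxpos.le) hD.le
        have hD' : 0 ≤ (q - 1) * x ^ (q - 1 - 1) * (p - 1) * (x ^ (q - 1) + a) ^ (p - 1 - 1) := by
          have := Real.rpow_pos_of_pos hsx (p - 1 - 1)
          have := Real.rpow_pos_of_pos hxpos (q - 1 - 1)
          positivity
        have hterm : 0 ≤ x * -((0 * (x ^ (q - 1) + a) ^ (p - 1) -
            lam * ((q - 1) * x ^ (q - 1 - 1) * (p - 1) * (x ^ (q - 1) + a) ^ (p - 1 - 1))) /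
              ((x ^ (q - 1) + a) ^ (p - 1)) ^ 2) := by
          rw [zero_mul, zero_sub, neg_div, neg_neg]
          have hsq : (0:ℝ) < ((x ^ (q - 1) + a) ^ (p - 1)) ^ 2 := by positivity
          exact mul_nonneg hxpos.le (div_nonneg (mul_nonneg h0.le hD') hsq.le)
        nlinarith
  -- conclude
  intro u v huv
  dsimp only
  split_ifs with hu hv hv
  · exact hFmono hu (le_trans hu huv) huv
  · exact absurd (le_trans hu huv) hv
  · exact hFnn v hv
  · exact le_rfl
end

section
/- Fix λ ≥ 0, q > 1 with Hölder conjugate p, and define w(u) = u·(1 - λ/(u^{q-1} + λ^{q-1})^{p-1}) for u ≥ 0 and w(u) = 0 for u < 0. Then w is 1-Lipschitz: for all u, v ∈ ℝ, |w(u) - w(v)| ≤ |u - v|. -/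
open Real

private lemma rpow_inv_self {x s : ℝ} (hx : 0 ≤ x) (hs : s ≠ 0) :
    (x ^ s) ^ (1 / s) = x := by
  rw [← Real.rpow_mul hx, mul_one_div_cancel hs, Real.rpow_one]

private lemma key_mono (lam s : ℝ) (hlam : 0 < lam) (hs : 0 < s)
    {u v : ℝ} (hv : 0 ≤ v) (huv : v ≤ u) :
    0 ≤ (u - lam * u / (u ^ s + lam ^ s) ^ (1 / s))
        - (v - lam * v / (v ^ s + lam ^ s) ^ (1 / s)) ∧
    (u - lam * u / (u ^ s + lam ^ s) ^ (1 / s))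
        - (v - lam * v / (v ^ s + lam ^ s) ^ (1 / s)) ≤ u - v := by
  have hu : 0 ≤ u := hv.trans huv
  set Au := (u ^ s + lam ^ s) ^ (1 / s) with hAu
  set Av := (v ^ s + lam ^ s) ^ (1 / s) with hAv
  have hsum_u : (0:ℝ) ≤ u ^ s + lam ^ s := by positivity
  have hsum_v : (0:ℝ) ≤ v ^ s + lam ^ s := by positivity
  have hlamAu : lam ≤ Au := by
    have h := Real.rpow_le_rpow (Real.rpow_nonneg hlam.le s)
      (le_add_of_nonneg_left (Real.rpow_nonneg hu s) : lam ^ s ≤ u ^ s + lam ^ s)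
      (by positivity : (0:ℝ) ≤ 1 / s)
    rwa [rpow_inv_self hlam.le hs.ne'] at h
  have hlamAv : lam ≤ Av := by
    have h := Real.rpow_le_rpow (Real.rpow_nonneg hlam.le s)
      (le_add_of_nonneg_left (Real.rpow_nonneg hv s) : lam ^ s ≤ v ^ s + lam ^ s)
      (by positivity : (0:ℝ) ≤ 1 / s)
    rwa [rpow_inv_self hlam.le hs.ne'] at h
  have hAu0 : 0 < Au := lt_of_lt_of_le hlam hlamAu
  have hAv0 : 0 < Av := lt_of_lt_of_le hlam hlamAv
  have hAvAu : Av ≤ Au := by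
    apply Real.rpow_le_rpow hsum_v _ (by positivity)
    have := Real.rpow_le_rpow hv huv hs.le
    linarith
  -- cross inequality : v * Au ≤ u * Av
  have hcross : v * Au ≤ u * Av := by
    have h1 : v * Au = (v ^ s * (u ^ s + lam ^ s)) ^ (1 / s) := by
      rw [Real.mul_rpow (Real.rpow_nonneg hv s) hsum_u, rpow_inv_self hv hs.ne']
    have h2 : u * Av = (u ^ s * (v ^ s + lam ^ s)) ^ (1 / s) := by
      rw [Real.mul_rpow (Real.rpow_nonneg hu s) hsum_v, rpow_inv_self hu hs.ne']
    rw [h1, h2]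
    apply Real.rpow_le_rpow (by positivity) _ (by positivity)
    have hvu : v ^ s ≤ u ^ s := Real.rpow_le_rpow hv huv hs.le
    have hl : (0:ℝ) ≤ lam ^ s := Real.rpow_nonneg hlam.le s
    nlinarith [Real.rpow_nonneg hv s, Real.rpow_nonneg hu s]
  constructor
  · -- w u - w v ≥ 0 : lam*u/Au - lam*v/Av ≤ u - v
    have h1 : lam * v / Au ≤ lam * v / Av :=
      div_le_div_of_nonneg_left (by positivity) hAv0 hAvAu
    have h2 : lam * u / Au - lam * v / Au = lam * (u - v) / Au := by ring
    have h3 : lam * (u - v) / Au ≤ u - v := by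
      rw [div_le_iff₀ hAu0]
      nlinarith
    have h3' : lam * u / Au - lam * v / Au ≤ u - v := by rw [h2]; exact h3
    linarith
  · -- w u - w v ≤ u - v : lam*u/Au - lam*v/Av ≥ 0
    have : lam * v / Av ≤ lam * u / Au := by
      rw [div_le_div_iff₀ hAv0 hAu0]
      nlinarith
    linarith

private lemma w_bounds (lam s : ℝ) (hlam : 0 < lam) (hs : 0 < s)
    {u : ℝ} (hu : 0 ≤ u) :
    0 ≤ u - lam * u / (u ^ s + lam ^ s) ^ (1 / s) ∧
    u - lam * u / (u ^ s + lam ^ s) ^ (1 / s) ≤ u := by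
  have h := key_mono lam s hlam hs (le_refl 0) hu
  simp only [Real.zero_rpow hs.ne', zero_add, mul_zero, zero_div, sub_zero, zero_sub] at h
  constructor
  · linarith [h.1]
  · linarith [h.2]

/-- The integrand `ϖ` of the generator `Θ` is 1-Lipschitz: for `λ ≥ 0` and
Hölder conjugates `p, q > 1`, with `w(u) = u·(1 - λ/(u^(q-1) + λ^(q-1))^(p-1))`
for `u ≥ 0`, `w(u) = 0` for `u < 0`, one has `|w u - w v| ≤ |u - v|`. -/
theorem stmt_4 (lam p q : ℝ) (hlam : 0 ≤ lam) (hp : 1 < p) (hq : 1 < q)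
    (hpq : 1 / p + 1 / q = 1)
    (w : ℝ → ℝ)
    (hw : w = fun u : ℝ =>
      if 0 ≤ u then u * (1 - lam / (u ^ (q - 1) + lam ^ (q - 1)) ^ (p - 1))
      else 0) :
    ∀ u v : ℝ, |w u - w v| ≤ |u - v| := by
  have hp0 : p ≠ 0 := by linarith
  have hq0 : q ≠ 0 := by linarith
  have hpq' : p + q = p * q := by
    field_simp at hpq; linarith
  have hs : 0 < q - 1 := by linarith
  have hp1 : p - 1 = 1 / (q - 1) := by
    rw [eq_div_iff hs.ne']
    nlinarith
  set s := q - 1 with hsdef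
  -- rewrite w in the convenient form on nonnegatives
  have hwpos : ∀ x : ℝ, 0 ≤ x → w x = x - lam * x / (x ^ s + lam ^ s) ^ (1 / s) := by
    intro x hx
    rw [hw]
    simp only [hx, if_true, hp1]
    ring
  have hwneg : ∀ x : ℝ, x < 0 → w x = 0 := by
    intro x hx
    rw [hw]
    simp [not_le.mpr hx]
  rcases eq_or_lt_of_le hlam with h0 | hlam'
  · -- lam = 0 : w x = x for x ≥ 0
    have hwid : ∀ x : ℝ, 0 ≤ x → w x = x := by
      intro x hx
      rw [hwpos x hx, ← h0]
      simp
    intro u v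
    rcases le_or_gt 0 u with hu | hu <;> rcases le_or_gt 0 v with hv | hv
    · rw [hwid u hu, hwid v hv]
    · rw [hwid u hu, hwneg v hv, sub_zero, abs_of_nonneg hu,
        abs_of_nonneg (by linarith : (0:ℝ) ≤ u - v)]; linarith
    · rw [hwneg u hu, hwid v hv, zero_sub, abs_neg, abs_of_nonneg hv,
        abs_of_nonpos (by linarith : u - v ≤ 0)]; linarith
    · rw [hwneg u hu, hwneg v hv]; simp [abs_nonneg]
  · -- lam > 0
    have key : ∀ a b : ℝ, b ≤ a → 0 ≤ w a - w b ∧ w a - w b ≤ a - b := by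
      intro a b hba
      rcases le_or_gt 0 b with hb | hb
      · have ha : 0 ≤ a := hb.trans hba
        rw [hwpos a ha, hwpos b hb]
        exact key_mono lam s hlam' hs hb hba
      · rw [hwneg b hb]
        rcases le_or_gt 0 a with ha | ha
        · rw [hwpos a ha]
          obtain ⟨h1, h2⟩ := w_bounds lam s hlam' hs ha
          exact ⟨by linarith, by linarith⟩
        · rw [hwneg a ha]
          exact ⟨by linarith, by linarith⟩
    intro u v
    rcases le_total v u with h | h
    · obtain ⟨h1, h2⟩ := key u v h
      rw [abs_of_nonneg h1, abs_of_nonneg (by linarith)]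
      exact h2
    · obtain ⟨h1, h2⟩ := key v u h
      rw [abs_sub_comm (w u), abs_sub_comm u v, abs_of_nonneg h1,
        abs_of_nonneg (by linarith : (0:ℝ) ≤ v - u)]
      exact h2
end

section
/- Let K > 0 and χ with |2χ| ≤ K², set δ* = K² + 2χ, and suppose ρ > δ*. Define δ(r) = r·(χ + K²/(2·min(r-1,1))) and h(r) = ρ·r/(ρ - δ(r)) on the set {r > 1 : δ(r) < ρ}. If moreover ρ ≤ 2K², then h attains its minimum at r = 2 with value 2ρ/(ρ - K² - 2χ). -/
/-- In the regime `|2χ| ≤ K²`, `δ* = K² + 2χ < ρ ≤ 2K²`, the function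
`h(r) = ρr/(ρ - δ(r))` attains its minimum over `{r > 1 : δ(r) < ρ}` at
`r = 2`, with value `2ρ/(ρ - K² - 2χ)`. -/
theorem stmt_10 (χ K ρ : ℝ) (hK : 0 < K) (hχ : |2 * χ| ≤ K ^ 2)
    (hρ : K ^ 2 + 2 * χ < ρ) (hρ2 : ρ ≤ 2 * K ^ 2)
    (δ h : ℝ → ℝ)
    (hδ : δ = fun r : ℝ => r * (χ + K ^ 2 / (2 * min (r - 1) 1)))
    (hh : h = fun r : ℝ => ρ * r / (ρ - δ r)) :
    δ 2 < ρ ∧ h 2 = 2 * ρ / (ρ - K ^ 2 - 2 * χ) ∧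
    ∀ r : ℝ, 1 < r → δ r < ρ → h 2 ≤ h r := by
  have habs := abs_le.mp hχ
  have hρ0 : 0 < ρ := by linarith [habs.1]
  have hδ2 : δ 2 = K ^ 2 + 2 * χ := by
    simp only [hδ]
    norm_num
    ring
  have hd2 : (0:ℝ) < ρ - δ 2 := by rw [hδ2]; linarith
  refine ⟨by linarith, ?_, ?_⟩
  · rw [hh]; simp only [hδ2]; ring_nf
  · intro r hr hrρ
    rw [hh]
    simp only
    have hd : (0:ℝ) < ρ - δ r := by linarith
    rw [div_le_div_iff₀ hd2 hd]
    rw [hδ2]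
    rcases le_or_gt 2 r with h2 | h2
    · have hmin : min (r - 1) 1 = 1 := min_eq_right (by linarith)
      have : δ r = r * (χ + K ^ 2 / 2) := by rw [hδ]; simp [hmin]
      rw [this]
      nlinarith [mul_nonneg (mul_nonneg hρ0.le hρ0.le) (by linarith : (0:ℝ) ≤ r - 2)]
    · have hr1 : (0:ℝ) < r - 1 := by linarith
      have hmin : min (r - 1) 1 = r - 1 := min_eq_left (by linarith)
      have hdr : δ r = r * (χ + K ^ 2 / (2 * (r - 1))) := by
        rw [hδ]; simp only [hmin]
      rw [hdr]
      set t := K ^ 2 / (2 * (r - 1)) with htdef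
      have ht : t * (2 * (r - 1)) = K ^ 2 := div_mul_cancel₀ _ (by positivity)
      have h2r : (0:ℝ) ≤ 2 - r := by linarith
      have key2 : 0 ≤ r * K ^ 2 - ρ * (r - 1) := by nlinarith
      nlinarith [mul_nonneg (mul_nonneg hρ0.le h2r) key2, mul_pos hρ0 hr1, ht]
end
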